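/- Let 1 ≤ p < ∞, let X be a separable Banach space, let 0 < δ ≤ 1 and α < ω₁, and let e ∈ H_α^δ(X). Define ē ∈ ((X ⊕ X)_p)^𝒟 with |ē| = |e| by ē(t) = 2^{−1/p}(e(t), e(t)) for all t ∈ D_{|e|}. Then ē ∈ H_{α+1}^δ((X ⊕ X)_p), where (X ⊕ X)_p is the ℓ_p-direct sum of two copies of X. -/

import Mathlib

set_option synthInstance.maxHeartbeats 1000000
set_option maxHeartbeats 2000000

open MeasureTheory ProbabilityTheory Ordinal
open scoped ENNReal

noncomputable section

/-- An element of `X^𝒟`: a function from the dyadic strings (elements of `D_n`,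
i.e. strings of `0`'s and `1`'s) of some length `n` to `X`. -/
def TreeEl (X : Type*) : Type _ := Σ n : ℕ, (Fin n → Bool) → X

namespace OrdinalLpIndex

/-- The strict partial order on `X^𝒟` : `u ≺ v` iff `|u| < |v|` and, with `k = |v| - |u|`,
`u(t) = 2^{-k/p} ∑_{s ∈ D_k} v(t·s)` for every `t ∈ D_{|u|}`. -/
def Prec {X : Type*} [NormedAddCommGroup X] [NormedSpace ℝ X] (p : ℝ) (u v : TreeEl X) :
    Prop :=
  ∃ h : u.1 < v.1, ∀ t : Fin u.1 → Bool,
    u.2 t = (2 : ℝ) ^ (-((v.1 - u.1 : ℕ) : ℝ) / p) •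
      ∑ s : Fin (v.1 - u.1) → Bool,
        v.2 (fun i => Fin.append t s (Fin.cast (Nat.add_sub_cancel' h.le).symm i))

variable (p δ : ℝ) (X : Type*) [NormedAddCommGroup X] [NormedSpace ℝ X]

/-- The set `H_0^δ(X)` : all `u ∈ X^𝒟` such that
`δ (∑_{t ∈ D_{|u|}} |c(t)|^p)^{1/p} ≤ ‖∑_{t ∈ D_{|u|}} c(t) u(t)‖ ≤ (∑_{t ∈ D_{|u|}} |c(t)|^p)^{1/p}`
for all real coefficients `c`. -/
def H0 : Set (TreeEl X) :=
  {u | ∀ c : (Fin u.1 → Bool) → ℝ,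
    δ * (∑ t, |c t| ^ p) ^ (1 / p) ≤ ‖∑ t, c t • u.2 t‖ ∧
      ‖∑ t, c t • u.2 t‖ ≤ (∑ t, |c t| ^ p) ^ (1 / p)}

/-- The transfinite family `H_α^δ(X)` : `H_{α+1}^δ(X) = {u ∈ H_α^δ(X) : u ≺ v for some
v ∈ H_α^δ(X)}` and `H_α^δ(X) = ⋂_{β<α} H_β^δ(X)` at limit ordinals. -/
def Hset (α : Ordinal) : Set (TreeEl X) :=
  Ordinal.limitRecOn α (H0 p δ X)
    (fun _ Hβ => {u | u ∈ Hβ ∧ ∃ v ∈ Hβ, Prec p u v})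
    (fun β _ ih => {u | ∀ γ (h : γ < β), u ∈ ih γ h})

/-- `h_p(δ, X)` : the least ordinal `α` with `H_α^δ(X) = H_{α+1}^δ(X)`. -/
def hIdx : Ordinal :=
  sInf {α | Hset p δ X α = Hset p δ X (α + 1)}

/-- The space `L_p[0,1]`. -/
abbrev Lp01 (p : ℝ) : Type :=
  Lp ℝ (ENNReal.ofReal p) (volume.restrict (Set.Icc (0 : ℝ) 1))

/-- `X` embeds isomorphically into `Y` : there is a bounded linear map `X → Y` which is
bounded below. -/
def Embeds (X Y : Type*) [NormedAddCommGroup X] [NormedSpace ℝ X] [NormedAddCommGroup Y]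
    [NormedSpace ℝ Y] : Prop :=
  ∃ T : X →L[ℝ] Y, ∃ c : ℝ, 0 < c ∧ ∀ x, c * ‖x‖ ≤ ‖T x‖

open scoped Classical in
/-- The ordinal `L_p`-index `h_p(X)` : `sup_{0<δ≤1} h_p(δ, X)` if `L_p[0,1]` does not embed
isomorphically into `X`, and `ω₁` otherwise. -/
def hp (hp1 : 1 ≤ p) : Ordinal :=
  haveI : Fact (1 ≤ ENNReal.ofReal p) := ⟨ENNReal.one_le_ofReal.2 hp1⟩
  if Embeds (Lp01 p) X then Ordinal.omega 1
  else ⨆ δ : Set.Ioc (0 : ℝ) 1, hIdx p δ X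

-- unfolding lemmas
theorem Hset_zero : Hset p δ X 0 = H0 p δ X := Ordinal.limitRecOn_zero _ _ _

theorem Hset_succ (α : Ordinal) :
    Hset p δ X (α + 1) = {u | u ∈ Hset p δ X α ∧ ∃ v ∈ Hset p δ X α, Prec p u v} :=
  Ordinal.limitRecOn_succ _ _ _ _

theorem Hset_limit (α : Ordinal) (h : Order.IsSuccLimit α) :
    Hset p δ X α = {u | ∀ γ (_ : γ < α), u ∈ Hset p δ X γ} :=
  Ordinal.limitRecOn_limit _ _ _ _ h

variable {X}

/-- delete bit `n₀` -/
def del (n₀ : ℕ) {m : ℕ} (q : Fin (m + 1) → Bool) : Fin m → Bool :=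
  fun i => if (i : ℕ) < n₀ then q i.castSucc else q i.succ

/-- helper for Fin.append through a cast -/
theorem append_cast_apply {α : Type*} {m k n : ℕ} (h : n = m + k) (a : Fin m → α)
    (b : Fin k → α) (i : Fin n) :
    Fin.append a b (Fin.cast h i) =
      if hi : (i : ℕ) < m then a ⟨i, hi⟩ else b ⟨(i : ℕ) - m, by omega⟩ := by
  split_ifs with hi
  · have : Fin.cast h i = Fin.castAdd k ⟨i, hi⟩ := by ext; simp
    rw [this, Fin.append_left]
  · have : Fin.cast h i = Fin.natAdd m ⟨(i : ℕ) - m, by omega⟩ := by ext; simp; omega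
    rw [this, Fin.append_right]


theorem append_cast_right {α : Type*} {n k k' m : ℕ} (hk : k = k') (h : m = n + k)
    (h' : m = n + k') (a : Fin n → α) (b : Fin k → α) :
    (fun i => Fin.append a b (Fin.cast h i)) =
      fun i => Fin.append a (fun j => b (Fin.cast hk.symm j)) (Fin.cast h' i) := by
  subst hk; rfl

theorem del_append (n₀ : ℕ) {n k m : ℕ} (hn : n₀ ≤ n) (h : m + 1 = (n + 1) + k)
    (h2 : m = n + k) (q : Fin (n + 1) → Bool) (s : Fin k → Bool) :
    del n₀ (fun i => Fin.append q s (Fin.cast h i)) =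
      fun i => Fin.append (del n₀ q) s (Fin.cast h2 i) := by
  funext i
  simp only [del]
  by_cases hi : (i : ℕ) < n₀
  · rw [if_pos hi, append_cast_apply h, append_cast_apply h2,
      dif_pos (show ((i.castSucc : ℕ)) < n + 1 by
        simp only [Fin.coe_castSucc]; omega),
      dif_pos (show (i : ℕ) < n by omega)]
    simp only [del]
    rw [if_pos (show ((⟨(i : ℕ), by omega⟩ : Fin n) : ℕ) < n₀ from hi)]
    exact congrArg q (Fin.ext (by simp))
  · rw [if_neg hi, append_cast_apply h, append_cast_apply h2]
    by_cases hiu : (i : ℕ) < n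
    · rw [dif_pos (show ((i.succ : ℕ)) < n + 1 by simp only [Fin.val_succ]; omega),
        dif_pos hiu]
      simp only [del]
      rw [if_neg (show ¬ ((⟨(i : ℕ), hiu⟩ : Fin n) : ℕ) < n₀ from hi)]
      exact congrArg q (Fin.ext (by simp))
    · rw [dif_neg (show ¬ ((i.succ : ℕ)) < n + 1 by simp only [Fin.val_succ]; omega),
        dif_neg hiu]
      exact congrArg s (Fin.ext (by simp only [Fin.val_succ]; omega))

def splitEquiv (n₀ m : ℕ) (hn : n₀ ≤ m) : (Fin (m + 1) → Bool) ≃ ((Fin m → Bool) × Bool) where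
  toFun q := (del n₀ q, q ⟨n₀, by omega⟩)
  invFun tb j :=
    if h : (j : ℕ) < n₀ then tb.1 ⟨(j : ℕ), by omega⟩
    else if h2 : (j : ℕ) = n₀ then tb.2
    else tb.1 ⟨(j : ℕ) - 1, by omega⟩
  left_inv q := by
    funext j
    dsimp only [del]
    by_cases h1 : (j : ℕ) < n₀
    · rw [dif_pos h1, if_pos (show ((⟨(j : ℕ), by omega⟩ : Fin m) : ℕ) < n₀ from h1)]
      exact congrArg q (Fin.ext (by simp))
    · rw [dif_neg h1]
      by_cases h2 : (j : ℕ) = n₀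
      · rw [dif_pos h2]; exact congrArg q (Fin.ext h2.symm)
      · rw [dif_neg h2,
          if_neg (show ¬ ((⟨(j : ℕ) - 1, by omega⟩ : Fin m) : ℕ) < n₀ by simp; omega)]
        exact congrArg q (Fin.ext (by simp; omega))
  right_inv tb := by
    ext i
    · dsimp only [del]
      by_cases h1 : (i : ℕ) < n₀
      · rw [if_pos h1, dif_pos (show ((i.castSucc : ℕ) < n₀) by simpa using h1)]
        exact congrArg tb.1 (Fin.ext (by simp))
      · rw [if_neg h1,
          dif_neg (show ¬ ((i.succ : ℕ) < n₀) by simp; omega),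
          dif_neg (show ¬ ((i.succ : ℕ) = n₀) by simp; omega)]
        exact congrArg tb.1 (Fin.ext (by simp))
    · dsimp only
      rw [dif_neg (show ¬ (((⟨n₀, by omega⟩ : Fin (m+1)) : ℕ) < n₀) by simp),
        dif_pos rfl]

section Analysis

variable {p δ : ℝ} {X : Type*} [NormedAddCommGroup X] [NormedSpace ℝ X]

omit [NormedSpace ℝ X] in
/-- The norm on `(X ⊕ X)_p`. -/
theorem Ynorm (hp0 : 0 < p) [Fact (1 ≤ ENNReal.ofReal p)] (z : X × X) :
    ‖(WithLp.equiv (ENNReal.ofReal p) (X × X)).symm z‖ = (‖z.1‖ ^ p + ‖z.2‖ ^ p) ^ (1 / p) := by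
  rw [WithLp.prod_norm_eq_add (by rw [ENNReal.toReal_ofReal hp0.le]; exact hp0),
    ENNReal.toReal_ofReal hp0.le]
  rfl

/-- Applying a linear isometry pointwise preserves `H0`. -/
theorem H0_map {Y : Type*} [NormedAddCommGroup Y] [NormedSpace ℝ Y] (T : X →ₗ[ℝ] Y)
    (hT : ∀ x, ‖T x‖ = ‖x‖) {u : TreeEl X} (hu : u ∈ H0 p δ X) :
    (⟨u.1, fun t => T (u.2 t)⟩ : TreeEl Y) ∈ H0 p δ Y := by
  intro c
  have h1 : (∑ t, c t • T (u.2 t)) = T (∑ t, c t • u.2 t) := by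
    rw [map_sum]
    exact Finset.sum_congr rfl fun t _ => (map_smul T (c t) (u.2 t)).symm
  have := hu c
  constructor
  · exact le_trans this.1 (by rw [h1, hT])
  · refine le_trans ?_ this.2
    rw [h1, hT]

/-- Applying a linear map pointwise preserves `Prec`. -/
theorem Prec_map {Y : Type*} [NormedAddCommGroup Y] [NormedSpace ℝ Y] (T : X →ₗ[ℝ] Y)
    {u v : TreeEl X} (h : Prec p u v) :
    Prec p (⟨u.1, fun t => T (u.2 t)⟩ : TreeEl Y) ⟨v.1, fun t => T (v.2 t)⟩ := by
  obtain ⟨hlt, hval⟩ := h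
  refine ⟨hlt, fun t => ?_⟩
  dsimp only
  rw [hval t, _root_.map_smul, map_sum]

end Analysis

section Diag

variable {p δ : ℝ} {X : Type*} [NormedAddCommGroup X] [NormedSpace ℝ X]

theorem rpow_one_div_rpow (hp0 : 0 < p) {x : ℝ} (hx : 0 ≤ x) : (x ^ (1 / p)) ^ p = x := by
  rw [← Real.rpow_mul hx, one_div_mul_cancel hp0.ne', Real.rpow_one]

theorem rpow_rpow_one_div (hp0 : 0 < p) {x : ℝ} (hx : 0 ≤ x) : (x ^ p) ^ (1 / p) = x := by
  rw [← Real.rpow_mul hx, mul_one_div_cancel hp0.ne', Real.rpow_one]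

/-- The diagonal embedding `x ↦ 2^{-1/p} (x, x)` of `X` into `(X ⊕ X)_p`. -/
def diagL (p : ℝ) (X : Type*) [NormedAddCommGroup X] [NormedSpace ℝ X] :
    X →ₗ[ℝ] WithLp (ENNReal.ofReal p) (X × X) :=
  ((2 : ℝ) ^ (-(1 : ℝ) / p)) •
    ((WithLp.linearEquiv (ENNReal.ofReal p) ℝ (X × X)).symm.toLinearMap.comp
      ((LinearMap.id : X →ₗ[ℝ] X).prod LinearMap.id))

theorem diagL_apply (x : X) :
    diagL p X x =
      (2 : ℝ) ^ (-(1 : ℝ) / p) • (WithLp.equiv (ENNReal.ofReal p) (X × X)).symm (x, x) :=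
  rfl

theorem norm_diagL (hp1 : 1 ≤ p) [Fact (1 ≤ ENNReal.ofReal p)] (x : X) :
    ‖diagL p X x‖ = ‖x‖ := by
  have hp0 : 0 < p := lt_of_lt_of_le one_pos hp1
  rw [diagL_apply, norm_smul, Ynorm hp0]
  have h1 : ‖(2 : ℝ) ^ (-(1 : ℝ) / p)‖ = (2 : ℝ) ^ (-(1 : ℝ) / p) := by
    rw [Real.norm_eq_abs, abs_of_pos (Real.rpow_pos_of_pos two_pos _)]
  have h2 : (‖x‖ ^ p + ‖x‖ ^ p) ^ (1 / p) = (2 : ℝ) ^ (1 / p) * ‖x‖ := by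
    rw [← two_mul, Real.mul_rpow (by norm_num) (Real.rpow_nonneg (norm_nonneg x) p),
      rpow_rpow_one_div hp0 (norm_nonneg x)]
  rw [h1, h2, ← mul_assoc, ← Real.rpow_add two_pos]
  have : -(1 : ℝ) / p + 1 / p = 0 := by ring
  rw [show (-(1:ℝ)/p + 1/p) = 0 by ring, Real.rpow_zero, one_mul]

end Diag

section Split

variable {p δ : ℝ} {X : Type*} [NormedAddCommGroup X] [NormedSpace ℝ X]

/-- Split a tree `w` into a tree on `(X ⊕ X)_p` of height one more, sending the two
halves (according to the bit in position `n₀`) into the two components. -/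
def splitE (p : ℝ) (n₀ : ℕ) (w : TreeEl X) : TreeEl (WithLp (ENNReal.ofReal p) (X × X)) :=
  ⟨w.1 + 1, fun q =>
    (WithLp.equiv (ENNReal.ofReal p) (X × X)).symm
      (if q ⟨min n₀ w.1, by omega⟩ then ((0 : X), w.2 (del (min n₀ w.1) q))
       else (w.2 (del (min n₀ w.1) q), (0 : X)))⟩

theorem splitE_H0 (hp1 : 1 ≤ p) (hδ : 0 ≤ δ) [Fact (1 ≤ ENNReal.ofReal p)] {n₀ : ℕ}
    {w : TreeEl X} (hn : n₀ ≤ w.1) (hw : w ∈ H0 p δ X) :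
    splitE p n₀ w ∈ H0 p δ (WithLp (ENNReal.ofReal p) (X × X)) := by
  have hp0 : 0 < p := lt_of_lt_of_le one_pos hp1
  intro c
  set E := splitEquiv n₀ w.1 hn with hE
  set c' : (Fin w.1 → Bool) → Bool → ℝ := fun t b => c (E.symm (t, b)) with hc'
  set A : X := ∑ t, c' t false • w.2 t with hA
  set B : X := ∑ t, c' t true • w.2 t with hB
  set S0 : ℝ := ∑ t, |c' t false| ^ p with hS0
  set S1 : ℝ := ∑ t, |c' t true| ^ p with hS1
  have hsplit_symm : ∀ (t : Fin w.1 → Bool) (b : Bool),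
      (splitE p n₀ w).2 (E.symm (t, b)) =
        (WithLp.equiv (ENNReal.ofReal p) (X × X)).symm
          (if b then ((0 : X), w.2 t) else (w.2 t, (0 : X))) := by
    intro t b
    have h1 : E (E.symm (t, b)) = (t, b) := E.apply_symm_apply _
    have hdel : del n₀ (E.symm (t, b)) = t := congrArg Prod.fst h1
    have hbit : (E.symm (t, b)) ⟨n₀, by omega⟩ = b := congrArg Prod.snd h1
    simp only [splitE, min_eq_left hn, hbit, hdel]
  -- algebraic identities in `WithLp` hold definitionally
  have hsmul : ∀ (r : ℝ) (z : X × X),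
      r • (WithLp.equiv (ENNReal.ofReal p) (X × X)).symm z =
        (WithLp.equiv (ENNReal.ofReal p) (X × X)).symm (r • z) :=
    fun r z => rfl
  have hadd : ∀ (z z' : X × X),
      (WithLp.equiv (ENNReal.ofReal p) (X × X)).symm z +
          (WithLp.equiv (ENNReal.ofReal p) (X × X)).symm z' =
        (WithLp.equiv (ENNReal.ofReal p) (X × X)).symm (z + z') :=
    fun z z' => rfl
  have hsymm_sum : ∀ (f : (Fin w.1 → Bool) → X × X),
      (∑ t, (WithLp.equiv (ENNReal.ofReal p) (X × X)).symm (f t)) =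
        (WithLp.equiv (ENNReal.ofReal p) (X × X)).symm (∑ t, f t) :=
    fun f => (map_sum (WithLp.addEquiv (ENNReal.ofReal p) (X × X)).symm f Finset.univ).symm
  -- the vector identity
  have hvec : (∑ t, c t • (splitE p n₀ w).2 t) =
      (WithLp.equiv (ENNReal.ofReal p) (X × X)).symm (A, B) := by
    calc (∑ t, c t • (splitE p n₀ w).2 t)
        = ∑ tb : (Fin w.1 → Bool) × Bool,
            c (E.symm tb) • (splitE p n₀ w).2 (E.symm tb) :=
          (Equiv.sum_comp E.symm (fun q => c q • (splitE p n₀ w).2 q)).symm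
      _ = ∑ t : Fin w.1 → Bool, ∑ b : Bool,
            c' t b • (splitE p n₀ w).2 (E.symm (t, b)) := by
          rw [Fintype.sum_prod_type]
      _ = ∑ t : Fin w.1 → Bool,
            (WithLp.equiv (ENNReal.ofReal p) (X × X)).symm
              ((c' t false • w.2 t, (0:X)) + ((0:X), c' t true • w.2 t)) := by
          refine Finset.sum_congr rfl fun t _ => ?_
          rw [Fintype.sum_bool, hsplit_symm t true, hsplit_symm t false]
          rw [if_pos rfl, if_neg (by simp), hsmul, hsmul, hadd, add_comm]
          congr 1
          simp [Prod.smul_mk, smul_zero]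
      _ = (WithLp.equiv (ENNReal.ofReal p) (X × X)).symm (A, B) := by
          rw [hsymm_sum]
          congr 1
          rw [Finset.sum_add_distrib, ← prod_mk_sum, ← prod_mk_sum]
          simp [Prod.mk_add_mk, hA, hB]
  -- the scalar identity
  have hscal : (∑ t, |c t| ^ p) = S0 + S1 := by
    calc (∑ t, |c t| ^ p)
        = ∑ tb : (Fin w.1 → Bool) × Bool, |c (E.symm tb)| ^ p :=
          (Equiv.sum_comp E.symm (fun q => |c q| ^ p)).symm
      _ = ∑ t : Fin w.1 → Bool, ∑ b : Bool, |c' t b| ^ p := by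
          rw [Fintype.sum_prod_type]
      _ = S0 + S1 := by
          rw [hS0, hS1, ← Finset.sum_add_distrib]
          refine Finset.sum_congr rfl fun t _ => ?_
          rw [Fintype.sum_bool, add_comm]
  have hwA := hw (fun t => c' t false)
  have hwB := hw (fun t => c' t true)
  have hS0nn : 0 ≤ S0 := Finset.sum_nonneg fun t _ => Real.rpow_nonneg (abs_nonneg _) p
  have hS1nn : 0 ≤ S1 := Finset.sum_nonneg fun t _ => Real.rpow_nonneg (abs_nonneg _) p
  have hnormABA : ‖A‖ ^ p ≤ S0 := by
    calc ‖A‖ ^ p ≤ (S0 ^ (1/p)) ^ p :=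
          Real.rpow_le_rpow (norm_nonneg _) hwA.2 hp0.le
      _ = S0 := rpow_one_div_rpow hp0 hS0nn
  have hnormABB : ‖B‖ ^ p ≤ S1 := by
    calc ‖B‖ ^ p ≤ (S1 ^ (1/p)) ^ p :=
          Real.rpow_le_rpow (norm_nonneg _) hwB.2 hp0.le
      _ = S1 := rpow_one_div_rpow hp0 hS1nn
  have hlowA : δ ^ p * S0 ≤ ‖A‖ ^ p := by
    calc δ ^ p * S0 = (δ * S0 ^ (1/p)) ^ p := by
          rw [Real.mul_rpow hδ (Real.rpow_nonneg hS0nn _), rpow_one_div_rpow hp0 hS0nn]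
      _ ≤ ‖A‖ ^ p :=
          Real.rpow_le_rpow (mul_nonneg hδ (Real.rpow_nonneg hS0nn _)) hwA.1 hp0.le
  have hlowB : δ ^ p * S1 ≤ ‖B‖ ^ p := by
    calc δ ^ p * S1 = (δ * S1 ^ (1/p)) ^ p := by
          rw [Real.mul_rpow hδ (Real.rpow_nonneg hS1nn _), rpow_one_div_rpow hp0 hS1nn]
      _ ≤ ‖B‖ ^ p :=
          Real.rpow_le_rpow (mul_nonneg hδ (Real.rpow_nonneg hS1nn _)) hwB.1 hp0.le
  rw [hvec, Ynorm hp0, hscal]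
  constructor
  · -- lower bound
    calc δ * (S0 + S1) ^ (1/p)
        = (δ ^ p * (S0 + S1)) ^ (1/p) := by
          rw [Real.mul_rpow (Real.rpow_nonneg hδ _) (by positivity),
            rpow_rpow_one_div hp0 hδ]
      _ ≤ (‖(A, B).1‖ ^ p + ‖(A, B).2‖ ^ p) ^ (1/p) := by
          apply Real.rpow_le_rpow (by positivity) _ (by positivity)
          rw [mul_add]
          exact add_le_add hlowA hlowB
  · -- upper bound
    apply Real.rpow_le_rpow (by positivity) _ (by positivity)
    exact add_le_add hnormABA hnormABB

theorem splitE_prec [Fact (1 ≤ ENNReal.ofReal p)] {n₀ : ℕ} {u v : TreeEl X}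
    (hn : n₀ ≤ u.1) (h : Prec p u v) :
    Prec p (splitE p n₀ u) (splitE p n₀ v) := by
  obtain ⟨hlt, hval⟩ := h
  have hn' : n₀ ≤ v.1 := le_trans hn hlt.le
  have hlt' : (splitE p n₀ u).1 < (splitE p n₀ v).1 := Nat.succ_lt_succ hlt
  refine ⟨hlt', fun q => ?_⟩
  have hkk : (splitE p n₀ v).1 - (splitE p n₀ u).1 = v.1 - u.1 := Nat.succ_sub_succ _ _
  set k' := (splitE p n₀ v).1 - (splitE p n₀ u).1 with hk'def
  set EK : (Fin k' → Bool) ≃ (Fin (v.1 - u.1) → Bool) :=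
    Equiv.arrowCongr (finCongr hkk) (Equiv.refl Bool) with hEKdef
  have hEK : ∀ (s : Fin k' → Bool) (i : Fin (v.1 - u.1)), EK s i = s (Fin.cast hkk.symm i) :=
    fun s i => rfl
  set P : (Fin (v.1 - u.1) → Bool) → X := fun s' =>
    v.2 (fun i => Fin.append (del n₀ q) s' (Fin.cast (Nat.add_sub_cancel' hlt.le).symm i))
    with hPdef
  -- `WithLp` algebra is definitional
  have hsmul : ∀ (r : ℝ) (z : X × X),
      r • (WithLp.equiv (ENNReal.ofReal p) (X × X)).symm z =
        (WithLp.equiv (ENNReal.ofReal p) (X × X)).symm (r • z) := fun r z => rfl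
  have hsymm_sum : ∀ (f : (Fin k' → Bool) → X × X),
      (∑ s, (WithLp.equiv (ENNReal.ofReal p) (X × X)).symm (f s)) =
        (WithLp.equiv (ENNReal.ofReal p) (X × X)).symm (∑ s, f s) := fun f =>
          (map_sum (WithLp.addEquiv (ENNReal.ofReal p) (X × X)).symm f Finset.univ).symm
  have hm : v.1 = u.1 + k' := by omega
  -- the key pointwise computation
  have hterm : ∀ s : Fin k' → Bool,
      (splitE p n₀ v).2
          (fun i => Fin.append q s (Fin.cast (Nat.add_sub_cancel' hlt'.le).symm i)) =
        (WithLp.equiv (ENNReal.ofReal p) (X × X)).symm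
          (if q ⟨n₀, Nat.lt_succ_of_le hn⟩ then ((0 : X), P (EK s))
           else (P (EK s), (0 : X))) := by
    intro s
    have hbit : (fun i => Fin.append q s (Fin.cast (Nat.add_sub_cancel' hlt'.le).symm i))
        (⟨n₀, Nat.lt_succ_of_le hn'⟩ : Fin (v.1 + 1)) = q ⟨n₀, Nat.lt_succ_of_le hn⟩ := by
      show Fin.append q s _ = _
      exact (append_cast_apply _ q s _).trans (dif_pos (Nat.lt_succ_of_le hn))
    have hdel : del n₀
        (fun i => Fin.append q s (Fin.cast (Nat.add_sub_cancel' hlt'.le).symm i)) =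
        fun i => Fin.append (del n₀ q) s (Fin.cast hm i) :=
      del_append n₀ hn _ hm q s
    have hPEK : v.2 (fun i => Fin.append (del n₀ q) s (Fin.cast hm i)) = P (EK s) := by
      refine congrArg v.2 ?_
      have hEKs : (fun j => s (Fin.cast hkk.symm j)) = EK s := by
        funext j; exact (hEK s j).symm
      calc (fun i => Fin.append (del n₀ q) s (Fin.cast hm i))
          = (fun i => Fin.append (del n₀ q) (fun j => s (Fin.cast hkk.symm j))
              (Fin.cast (Nat.add_sub_cancel' hlt.le).symm i)) :=
            append_cast_right hkk hm (Nat.add_sub_cancel' hlt.le).symm _ s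
        _ = (fun i => Fin.append (del n₀ q) (EK s)
              (Fin.cast (Nat.add_sub_cancel' hlt.le).symm i)) := by rw [hEKs]
    simp only [splitE, min_eq_left hn']
    rw [← hPEK, ← hdel]
    exact congrArg _ (if_congr (Iff.of_eq (congrArg (· = true) hbit)) rfl rfl)
  -- now assemble
  refine Eq.symm ?_
  calc (2 : ℝ) ^ (-(k' : ℝ) / p) •
        ∑ s : Fin k' → Bool,
          (splitE p n₀ v).2
            (fun i => Fin.append q s (Fin.cast (Nat.add_sub_cancel' hlt'.le).symm i))
      = (2 : ℝ) ^ (-(k' : ℝ) / p) •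
          ∑ s : Fin k' → Bool,
            (WithLp.equiv (ENNReal.ofReal p) (X × X)).symm
              (if q ⟨n₀, Nat.lt_succ_of_le hn⟩ then ((0 : X), P (EK s))
               else (P (EK s), (0 : X))) := by
        rw [Finset.sum_congr rfl fun s _ => hterm s]
    _ = (2 : ℝ) ^ (-(k' : ℝ) / p) •
          (WithLp.equiv (ENNReal.ofReal p) (X × X)).symm
            (if q ⟨n₀, Nat.lt_succ_of_le hn⟩
             then ((0 : X), ∑ s' : Fin (v.1 - u.1) → Bool, P s')
             else (∑ s' : Fin (v.1 - u.1) → Bool, P s', (0 : X))) := by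
        rw [hsymm_sum]
        congr 2
        by_cases hb : q ⟨n₀, Nat.lt_succ_of_le hn⟩ = true
        · rw [Finset.sum_congr rfl fun (s : Fin k' → Bool) _ => if_pos hb, if_pos hb,
            ← prod_mk_sum]
          simp only [Finset.sum_const, smul_zero, Finset.sum_const_zero]
          exact congrArg (fun z => ((0 : X), z)) (Equiv.sum_comp EK P)
        · rw [Finset.sum_congr rfl fun (s : Fin k' → Bool) _ => if_neg hb, if_neg hb,
            ← prod_mk_sum]
          simp only [Finset.sum_const, smul_zero, Finset.sum_const_zero]
          exact congrArg (fun z => (z, (0 : X))) (Equiv.sum_comp EK P)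
    _ = (2 : ℝ) ^ (-((v.1 - u.1 : ℕ) : ℝ) / p) •
          (WithLp.equiv (ENNReal.ofReal p) (X × X)).symm
            (if q ⟨n₀, Nat.lt_succ_of_le hn⟩
             then ((0 : X), ∑ s' : Fin (v.1 - u.1) → Bool, P s')
             else (∑ s' : Fin (v.1 - u.1) → Bool, P s', (0 : X))) := by
        rw [hkk]
    _ = (WithLp.equiv (ENNReal.ofReal p) (X × X)).symm
          (if q ⟨n₀, Nat.lt_succ_of_le hn⟩
           then ((0 : X), u.2 (del n₀ q))
           else (u.2 (del n₀ q), (0 : X))) := by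
        rw [hsmul, hval (del n₀ q)]
        by_cases hb : q ⟨n₀, Nat.lt_succ_of_le hn⟩ = true
        · rw [if_pos hb, if_pos hb, Prod.smul_mk, smul_zero]
        · rw [if_neg hb, if_neg hb, Prod.smul_mk, smul_zero]
    _ = (splitE p n₀ u).2 q := by
        simp only [splitE, min_eq_left hn]
        rfl

end Split

section Transfer

variable {p δ : ℝ} {X : Type*} [NormedAddCommGroup X] [NormedSpace ℝ X]

/-- Pointwise application of a linear isometry maps `H_α` into `H_α`. -/
theorem Hset_map {Y : Type*} [NormedAddCommGroup Y] [NormedSpace ℝ Y]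
    (T : X →ₗ[ℝ] Y) (hT : ∀ x, ‖T x‖ = ‖x‖) (α : Ordinal) :
    ∀ {u : TreeEl X}, u ∈ Hset p δ X α →
      (⟨u.1, fun t => T (u.2 t)⟩ : TreeEl Y) ∈ Hset p δ Y α := by
  induction α using Ordinal.limitRecOn with
  | zero =>
    intro u hu
    rw [Hset_zero] at hu ⊢
    exact H0_map T hT hu
  | add_one β ih =>
    intro u hu
    rw [Hset_succ] at hu ⊢
    obtain ⟨hu1, v, hv, hpv⟩ := hu
    exact ⟨ih hu1, ⟨v.1, fun t => T (v.2 t)⟩, ih hv, Prec_map T hpv⟩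
  | limit β hβ ih =>
    intro u hu
    rw [Hset_limit p δ X β hβ] at hu
    rw [Hset_limit p δ Y β hβ]
    intro γ hγ
    exact ih γ hγ (hu γ hγ)

/-- Splitting maps `H_α ∩ {n₀ ≤ |w|}` into `H_α` of `(X ⊕ X)_p`. -/
theorem Hset_split (hp1 : 1 ≤ p) (hδ : 0 ≤ δ) [Fact (1 ≤ ENNReal.ofReal p)] (n₀ : ℕ)
    (α : Ordinal) :
    ∀ {w : TreeEl X}, w ∈ Hset p δ X α → n₀ ≤ w.1 →
      splitE p n₀ w ∈ Hset p δ (WithLp (ENNReal.ofReal p) (X × X)) α := by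
  induction α using Ordinal.limitRecOn with
  | zero =>
    intro w hw hn
    rw [Hset_zero] at hw ⊢
    exact splitE_H0 hp1 hδ hn hw
  | add_one β ih =>
    intro w hw hn
    rw [Hset_succ] at hw ⊢
    obtain ⟨hw1, v, hv, hlt, hval⟩ := hw
    exact ⟨ih hw1 hn, splitE p n₀ v, ih hv (le_trans hn hlt.le),
      splitE_prec hn ⟨hlt, hval⟩⟩
  | limit β hβ ih =>
    intro w hw hn
    rw [Hset_limit p δ X β hβ] at hw
    rw [Hset_limit p δ _ β hβ]
    intro γ hγ
    exact ih γ hγ (hw γ hγ) hn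

/-- The doubled tree precedes the split tree. -/
theorem bar_prec_split (hp1 : 1 ≤ p) [Fact (1 ≤ ENNReal.ofReal p)] (e : TreeEl X) :
    Prec p (⟨e.1, fun t => diagL p X (e.2 t)⟩ :
        TreeEl (WithLp (ENNReal.ofReal p) (X × X)))
      (splitE p e.1 e) := by
  refine ⟨Nat.lt_succ_self e.1, ?_⟩
  show ∀ t : Fin e.1 → Bool, (2 : ℝ) ^ (-(1 : ℝ) / p) •
        (WithLp.equiv (ENNReal.ofReal p) (X × X)).symm (e.2 t, e.2 t) =
      (2 : ℝ) ^ (-((e.1 + 1 - e.1 : ℕ) : ℝ) / p) •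
        ∑ s : Fin (e.1 + 1 - e.1) → Bool,
          (splitE p e.1 e).2
            (fun i => Fin.append t s
              (Fin.cast (Nat.add_sub_cancel' (Nat.lt_succ_self e.1).le).symm i))
  intro t
  have h1 : ((e.1 + 1 - e.1 : ℕ) : ℝ) = 1 := by simp
  have h0lt : 0 < e.1 + 1 - e.1 := by omega
  set E2 : (Fin (e.1 + 1 - e.1) → Bool) ≃ Bool :=
    { toFun := fun s => s ⟨0, h0lt⟩
      invFun := fun b _ => b
      left_inv := fun s => funext fun i => congrArg s (Fin.ext (by omega))
      right_inv := fun b => rfl } with hE2def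
  have hE2 : ∀ b : Bool, ∀ i, E2.symm b i = b := fun b i => rfl
  -- pointwise computation
  have hterm : ∀ s : Fin (e.1 + 1 - e.1) → Bool,
      (splitE p e.1 e).2
          (fun i => Fin.append t s
            (Fin.cast (Nat.add_sub_cancel' (Nat.lt_succ_self e.1).le).symm i)) =
        (WithLp.equiv (ENNReal.ofReal p) (X × X)).symm
          (if s ⟨0, h0lt⟩ then ((0 : X), e.2 t) else (e.2 t, (0 : X))) := by
    intro s
    have hbit : (fun i => Fin.append t s
          (Fin.cast (Nat.add_sub_cancel' (Nat.lt_succ_self e.1).le).symm i))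
        (⟨e.1, Nat.lt_succ_self e.1⟩ : Fin (e.1 + 1)) = s ⟨0, h0lt⟩ := by
      show Fin.append t s _ = _
      rw [append_cast_apply, dif_neg (by simp)]
      exact congrArg s (Fin.ext (by simp))
    have hdel : del e.1
        (fun i => Fin.append t s
          (Fin.cast (Nat.add_sub_cancel' (Nat.lt_succ_self e.1).le).symm i)) = t := by
      funext i
      simp only [del]
      rw [if_pos i.isLt, append_cast_apply,
        dif_pos (show ((i.castSucc : ℕ)) < e.1 by simpa using i.isLt)]
      exact congrArg t (Fin.ext (by simp))
    simp only [splitE, min_self, hbit, hdel]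
  -- assemble
  have hsum : (∑ s : Fin (e.1 + 1 - e.1) → Bool,
      (splitE p e.1 e).2
        (fun i => Fin.append t s
          (Fin.cast (Nat.add_sub_cancel' (Nat.lt_succ_self e.1).le).symm i))) =
      (WithLp.equiv (ENNReal.ofReal p) (X × X)).symm (e.2 t, e.2 t) := by
    rw [← Equiv.sum_comp E2.symm (fun s => (splitE p e.1 e).2
      (fun i => Fin.append t s
        (Fin.cast (Nat.add_sub_cancel' (Nat.lt_succ_self e.1).le).symm i))),
      Fintype.sum_bool, hterm (E2.symm true), hterm (E2.symm false), hE2, hE2]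
    rw [if_pos rfl, if_neg (by simp)]
    have : (WithLp.equiv (ENNReal.ofReal p) (X × X)).symm ((0 : X), e.2 t) +
        (WithLp.equiv (ENNReal.ofReal p) (X × X)).symm (e.2 t, (0 : X)) =
        (WithLp.equiv (ENNReal.ofReal p) (X × X)).symm
          (((0 : X), e.2 t) + (e.2 t, (0 : X))) := rfl
    rw [this, Prod.mk_add_mk, zero_add, add_zero]
  rw [hsum, h1]

end Transfer

end OrdinalLpIndex

open OrdinalLpIndex

/-- Let `1 ≤ p < ∞`, `X` a separable Banach space, `0 < δ ≤ 1`, `α < ω₁` and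
`e ∈ H_α^δ(X)`.  Define `ē` with `|ē| = |e|` by `ē(t) = 2^{-1/p}(e(t) ⊕ e(t))`.  Then
`ē ∈ H_{α+1}^δ((X ⊕ X)_p)`. -/
theorem doubled_mem_H_succ (p : ℝ) (hp1 : 1 ≤ p)
    (X : Type) [NormedAddCommGroup X] [NormedSpace ℝ X] [CompleteSpace X]
    [TopologicalSpace.SeparableSpace X]
    (δ : ℝ) (hδ1 : 0 < δ) (hδ2 : δ ≤ 1) (α : Ordinal) (hα : α < Ordinal.omega 1)
    (e : TreeEl X) (he : e ∈ Hset p δ X α) :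
    haveI : Fact (1 ≤ ENNReal.ofReal p) := ⟨ENNReal.one_le_ofReal.2 hp1⟩
    (⟨e.1, fun t => (2 : ℝ) ^ (-(1 : ℝ) / p) •
        (WithLp.equiv (ENNReal.ofReal p) (X × X)).symm (e.2 t, e.2 t)⟩ :
      TreeEl (WithLp (ENNReal.ofReal p) (X × X))) ∈
      Hset p δ (WithLp (ENNReal.ofReal p) (X × X)) (α + 1) := by
  haveI : Fact (1 ≤ ENNReal.ofReal p) := ⟨ENNReal.one_le_ofReal.2 hp1⟩
  have hbar : (⟨e.1, fun t => diagL p X (e.2 t)⟩ :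
      TreeEl (WithLp (ENNReal.ofReal p) (X × X))) ∈
      Hset p δ (WithLp (ENNReal.ofReal p) (X × X)) α :=
    Hset_map (diagL p X) (norm_diagL hp1) α he
  have hsplit : splitE p e.1 e ∈ Hset p δ (WithLp (ENNReal.ofReal p) (X × X)) α :=
    Hset_split hp1 hδ1.le e.1 α he le_rfl
  have hprec := bar_prec_split hp1 e
  rw [Hset_succ]
  exact ⟨hbar, splitE p e.1 e, hsplit, hprec⟩

end
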